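/- The only orthogonal transformations of ℝ¹⁶ commuting with all nine involutions S₀,...,S₈ of the standard Spin(9) Clifford system are ±Id. -/

import Mathlib

noncomputable section

/-- The octonions, built from pairs of quaternions by the Cayley–Dickson construction. -/
abbrev Oct : Type := Quaternion ℝ × Quaternion ℝ

/-- Cayley–Dickson multiplication of octonions: `(a,b)(c,d) = (ac - d̄b, da + bc̄)`. -/
def octMul (x y : Oct) : Oct :=
  (x.1 * y.1 - star y.2 * x.2, y.2 * x.1 + x.2 * star y.1)

/-- The standard inner product on the octonions `𝕆 ≅ ℝ⁸`. -/
def octInner (x y : Oct) : ℝ := (x.1 * star y.1).re + (x.2 * star y.2).re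

/-- The standard inner product on `𝕆² ≅ ℝ¹⁶`. -/
def octInner2 (p q : Oct × Oct) : ℝ := octInner p.1 q.1 + octInner p.2 q.2

/-- The seven imaginary unit octonions `i, j, k, e, f, g, h` of the standard basis. -/
def imOct : Fin 7 → Oct :=
  ![((⟨0, 1, 0, 0⟩ : Quaternion ℝ), 0), ((⟨0, 0, 1, 0⟩ : Quaternion ℝ), 0),
    ((⟨0, 0, 0, 1⟩ : Quaternion ℝ), 0), (0, 1),
    (0, (⟨0, 1, 0, 0⟩ : Quaternion ℝ)), (0, (⟨0, 0, 1, 0⟩ : Quaternion ℝ)),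
    (0, (⟨0, 0, 0, 1⟩ : Quaternion ℝ))]

/-- The block operator `[[0, -R_u],[R_u, 0]]` on `𝕆²`. -/
def Sblk (u : Oct) : Oct × Oct → Oct × Oct := fun p => (-octMul p.2 u, octMul p.1 u)

/-- The nine involutions `S₀, …, S₈` of the standard `Spin(9)` Clifford system on `ℝ¹⁶ ≅ 𝕆²`. -/
def S9 : Fin 9 → Oct × Oct → Oct × Oct :=
  ![fun p => (p.2, p.1),
    Sblk (imOct 0), Sblk (imOct 1), Sblk (imOct 2), Sblk (imOct 3),
    Sblk (imOct 4), Sblk (imOct 5), Sblk (imOct 6),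
    fun p => (p.1, -p.2)]

open scoped Quaternion

-- auxiliary lemmas
def E1 : Oct := ((1 : Quaternion ℝ), 0)

def qI : Quaternion ℝ := ⟨0, 1, 0, 0⟩
def qJ : Quaternion ℝ := ⟨0, 0, 1, 0⟩
def qK : Quaternion ℝ := ⟨0, 0, 0, 1⟩
@[simp] lemma qI_re : qI.re = 0 := rfl
@[simp] lemma qI_imI : qI.imI = 1 := rfl
@[simp] lemma qI_imJ : qI.imJ = 0 := rfl
@[simp] lemma qI_imK : qI.imK = 0 := rfl
@[simp] lemma qJ_re : qJ.re = 0 := rfl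
@[simp] lemma qJ_imI : qJ.imI = 0 := rfl
@[simp] lemma qJ_imJ : qJ.imJ = 1 := rfl
@[simp] lemma qJ_imK : qJ.imK = 0 := rfl
@[simp] lemma qK_re : qK.re = 0 := rfl
@[simp] lemma qK_imI : qK.imI = 0 := rfl
@[simp] lemma qK_imJ : qK.imJ = 0 := rfl
@[simp] lemma qK_imK : qK.imK = 1 := rfl

lemma imOct0 : imOct 0 = (qI, 0) := rfl
lemma imOct1 : imOct 1 = (qJ, 0) := rfl
lemma imOct2 : imOct 2 = (qK, 0) := rfl
lemma imOct3 : imOct 3 = (0, 1) := rfl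
lemma imOct4 : imOct 4 = (0, qI) := rfl
lemma imOct5 : imOct 5 = (0, qJ) := rfl
lemma imOct6 : imOct 6 = (0, qK) := rfl

lemma S9_0 (p : Oct × Oct) : S9 0 p = (p.2, p.1) := rfl
lemma S9_1 (p : Oct × Oct) : S9 1 p = Sblk (imOct 0) p := rfl
lemma S9_2 (p : Oct × Oct) : S9 2 p = Sblk (imOct 1) p := rfl
lemma S9_3 (p : Oct × Oct) : S9 3 p = Sblk (imOct 2) p := rfl
lemma S9_4 (p : Oct × Oct) : S9 4 p = Sblk (imOct 3) p := rfl
lemma S9_5 (p : Oct × Oct) : S9 5 p = Sblk (imOct 4) p := rfl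
lemma S9_6 (p : Oct × Oct) : S9 6 p = Sblk (imOct 5) p := rfl
lemma S9_7 (p : Oct × Oct) : S9 7 p = Sblk (imOct 6) p := rfl
lemma S9_8 (p : Oct × Oct) : S9 8 p = (p.1, -p.2) := rfl

lemma octMul_one_left (u : Oct) : octMul E1 u = u := by simp [octMul, E1]
lemma octMul_one_right (u : Oct) : octMul u E1 = u := by simp [octMul, E1]
lemma octMul_zero_left (u : Oct) : octMul 0 u = 0 := by simp [octMul]
lemma octMul_neg_left (b u : Oct) : octMul (-b) u = -octMul b u := by
  simp [octMul, Prod.ext_iff, neg_mul, mul_neg]; constructor <;> abel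

lemma octMul_add (b y z : Oct) : octMul b (y + z) = octMul b y + octMul b z := by
  simp [octMul, mul_add, add_mul, Prod.ext_iff]; constructor <;> abel

lemma octMul_smul (b : Oct) (r : ℝ) (y : Oct) : octMul b (r • y) = r • octMul b y := by
  simp [octMul, Prod.smul_def, mul_smul_comm, smul_mul_assoc, smul_sub, smul_add]

lemma oct_decomp (x : Oct) : x = x.1.re • E1 + x.1.imI • imOct 0 + x.1.imJ • imOct 1 +
    x.1.imK • imOct 2 + x.2.re • imOct 3 + x.2.imI • imOct 4 + x.2.imJ • imOct 5 +
    x.2.imK • imOct 6 := by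
  simp [E1, imOct0, imOct1, imOct2, imOct3, imOct4, imOct5, imOct6, Prod.ext_iff,
    Quaternion.ext_iff, Prod.smul_def]

lemma nucleus (b : Oct)
    (h1 : octMul b (octMul (imOct 0) (imOct 1)) = octMul (octMul b (imOct 0)) (imOct 1))
    (h2 : octMul b (octMul (imOct 0) (imOct 3)) = octMul (octMul b (imOct 0)) (imOct 3))
    (h3 : octMul b (octMul (imOct 1) (imOct 3)) = octMul (octMul b (imOct 1)) (imOct 3)) :
    b = b.1.re • E1 := by
  simp [octMul, imOct0, imOct1, imOct3, Quaternion.ext_iff, Prod.ext_iff] at h1 h2 h3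
  simp [E1, Prod.ext_iff, Quaternion.ext_iff, Prod.smul_def]
  refine ⟨⟨?_, ?_, ?_⟩, ?_, ?_, ?_, ?_⟩ <;>
    linarith [h1.1, h1.2.1, h1.2.2.1, h1.2.2.2, h2.1.1, h2.1.2, h2.2.1, h2.2.2,
      h3.1.1, h3.1.2, h3.2.1, h3.2.2]

theorem stmt_16 (A : Oct × Oct → Oct × Oct) (hlin : IsLinearMap ℝ A)
    (horth : ∀ p q : Oct × Oct, octInner2 (A p) (A q) = octInner2 p q)
    (hcomm : ∀ (a : Fin 9) (p : Oct × Oct), A (S9 a p) = S9 a (A p)) :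
    (∀ p, A p = p) ∨ ∀ p, A p = -p := by
  set b : Oct := (A (E1, 0)).1 with hbdef
  -- Step 1: A (E1, 0) = (b, 0)
  have hv : A (E1, 0) = (b, 0) := by
    have h8 := hcomm 8 (E1, 0)
    rw [S9_8, S9_8] at h8
    simp only [neg_zero] at h8
    have h2 := congrArg Prod.snd h8
    simp only at h2
    have : (A (E1, 0)).2 = 0 := by
      have := h2
      rw [eq_neg_iff_add_eq_zero] at this
      have h4 : (2 : ℝ) • (A (E1, 0)).2 = 0 := by
        rw [two_smul]; exact this
      have := smul_eq_zero.mp h4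
      simpa using this
    exact Prod.ext rfl this
  -- Step 2: A (0, imOct k) = (0, octMul b (imOct k)) for each k
  have hswap : ∀ p : Oct × Oct, A (p.2, p.1) = ((A p).2, (A p).1) := by
    intro p
    have := hcomm 0 p
    rw [S9_0, S9_0] at this
    exact this
  have hIm : ∀ k : Fin 7, A (0, imOct k) = (0, octMul b (imOct k)) := by
    have key : ∀ (a : Fin 9) (u : Oct), (∀ p, S9 a p = Sblk u p) →
        A (0, u) = (0, octMul b u) := by
      intro a u hS
      have h := hcomm a (E1, 0)
      rw [hS, hS, hv] at h
      simp only [Sblk, octMul_zero_left, octMul_one_left, neg_zero] at h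
      exact h
    intro k
    fin_cases k
    · exact key 1 (imOct 0) S9_1
    · exact key 2 (imOct 1) S9_2
    · exact key 3 (imOct 2) S9_3
    · exact key 4 (imOct 3) S9_4
    · exact key 5 (imOct 4) S9_5
    · exact key 6 (imOct 5) S9_6
    · exact key 7 (imOct 6) S9_7
  have hIm' : ∀ k : Fin 7, A (imOct k, 0) = (octMul b (imOct k), 0) := by
    intro k
    have := hswap (0, imOct k)
    simp only [hIm k] at this
    exact this
  -- Step 3: A (x, 0) = (octMul b x, 0) for all x
  have hA1 : ∀ x : Oct, A (x, 0) = (octMul b x, 0) := by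
    intro x
    have hxpair : ((x, (0 : Oct)) : Oct × Oct) =
        x.1.re • (E1, 0) + x.1.imI • (imOct 0, 0) + x.1.imJ • (imOct 1, 0) +
        x.1.imK • (imOct 2, 0) + x.2.re • (imOct 3, 0) + x.2.imI • (imOct 4, 0) +
        x.2.imJ • (imOct 5, 0) + x.2.imK • (imOct 6, 0) := by
      refine Prod.ext ?_ ?_ <;> simp [Prod.smul_def]
      exact oct_decomp x
    have hv' : A (E1, 0) = (octMul b E1, 0) := by rw [hv, octMul_one_right]
    rw [hxpair]
    rw [hlin.map_add, hlin.map_add, hlin.map_add, hlin.map_add, hlin.map_add,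
      hlin.map_add, hlin.map_add]
    rw [hlin.map_smul, hlin.map_smul, hlin.map_smul, hlin.map_smul, hlin.map_smul,
      hlin.map_smul, hlin.map_smul, hlin.map_smul]
    rw [hv', hIm' 0, hIm' 1, hIm' 2, hIm' 3, hIm' 4, hIm' 5, hIm' 6]
    have hexp : octMul b x = x.1.re • octMul b E1 + x.1.imI • octMul b (imOct 0) +
        x.1.imJ • octMul b (imOct 1) + x.1.imK • octMul b (imOct 2) +
        x.2.re • octMul b (imOct 3) + x.2.imI • octMul b (imOct 4) +
        x.2.imJ • octMul b (imOct 5) + x.2.imK • octMul b (imOct 6) := by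
      conv_lhs => rw [oct_decomp x]
      simp only [octMul_add, octMul_smul]
    rw [hexp]
    refine Prod.ext ?_ ?_ <;> simp [Prod.smul_def]
  have hA2 : ∀ x : Oct, A (0, x) = (0, octMul b x) := by
    intro x
    have := hswap (x, 0)
    rw [hA1 x] at this
    simpa using this
  -- Step 4: associator constraints force b real
  have hassoc : ∀ (a : Fin 9) (u : Oct), (∀ p, S9 a p = Sblk u p) → ∀ x : Oct,
      octMul b (octMul x u) = octMul (octMul b x) u := by
    intro a u hS x
    have h := hcomm a (x, 0)
    rw [hS, hS, hA1 x] at h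
    simp only [Sblk, octMul_zero_left, neg_zero] at h
    rw [hA2] at h
    have := congrArg Prod.snd h
    simpa using this
  have hbreal : b = b.1.re • E1 :=
    nucleus b (hassoc 2 (imOct 1) S9_2 (imOct 0)) (hassoc 4 (imOct 3) S9_4 (imOct 0))
      (hassoc 4 (imOct 3) S9_4 (imOct 1))
  -- Step 5: norm one
  set t : ℝ := b.1.re with htdef
  have hnorm : t * t = 1 := by
    have h := horth (E1, 0) (E1, 0)
    rw [hv] at h
    rw [hbreal] at h
    simp [octInner2, octInner, E1, Prod.smul_def, Quaternion.ext_iff] at h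
    convert h using 1
  have hAall : ∀ p : Oct × Oct, A p = (octMul b p.1, octMul b p.2) := by
    intro p
    have hp : p = ((p.1, 0) : Oct × Oct) + (0, p.2) := by simp
    rw [hp, hlin.map_add, hA1, hA2]
    simp
  rcases mul_self_eq_one_iff.mp hnorm with ht | ht
  · left
    intro p
    have hbE : b = E1 := by rw [hbreal, ht, one_smul]
    rw [hAall, hbE, octMul_one_left, octMul_one_left]
  · right
    intro p
    have hbE : b = -E1 := by rw [hbreal, ht]; simp
    rw [hAall, hbE, octMul_neg_left, octMul_neg_left, octMul_one_left, octMul_one_left]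
    rfl
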